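/- Let P ⊂ ℝ^d be finite and let f : ℝ^d → ℝⁿ be 1-Lipschitz with respect to the Euclidean metrics. Then f is 1-Lipschitz with respect to the nearest-neighbor geodesic distances: for all a, b ∈ ℝ^d, d_N^{f(P)}(f(a), f(b)) ≤ d_N^P(a, b), where d_N^P and d_N^{f(P)} denote the nearest-neighbor geodesic distances relative to P and to the image set f(P), respectively. -/

import Mathlib

open scoped BigOperators
open MeasureTheory

noncomputable section

/-- Points of `ℝ^d`. -/
abbrev Pt (d : ℕ) : Type := EuclideanSpace ℝ (Fin d)

/-- The edge-squared metric on a point set `P ⊆ ℝ^d`: the infimum over finite chains of points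
of `P` from `a` to `b` of the sum of squared Euclidean lengths of the steps. -/
noncomputable def edgeSq {d : ℕ} (P : Set (Pt d)) (a b : Pt d) : ℝ :=
  sInf {c : ℝ | ∃ (k : ℕ) (p : Fin (k + 1) → Pt d), p 0 = a ∧ p (Fin.last k) = b ∧
    (∀ i, p i ∈ P) ∧ c = ∑ i : Fin k, ‖p i.succ - p i.castSucc‖ ^ 2}

/-- A path `γ : [0,1] → ℝ^d` is piecewise-C¹ if it is continuous on `[0,1]` and there is a
partition `0 = t₀ < t₁ < ⋯ < t_m = 1` such that `γ` is `C¹` on each subinterval. -/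
def PiecewiseC1 {d : ℕ} (γ : ℝ → Pt d) : Prop :=
  ContinuousOn γ (Set.Icc 0 1) ∧
  ∃ (m : ℕ) (t : Fin (m + 1) → ℝ), StrictMono t ∧ t 0 = 0 ∧ t (Fin.last m) = 1 ∧
    ∀ i : Fin m, ContDiffOn ℝ 1 γ (Set.Icc (t i.castSucc) (t i.succ))

/-- The nearest-neighbor length of a path: `ℓ(γ) = ∫₀¹ r_P(γ(t)) ‖γ'(t)‖ dt`, where
`r_P(z) = min_{x ∈ P} ‖x - z‖` is the distance to the nearest point of `P`. -/
noncomputable def nnLength {d : ℕ} (P : Set (Pt d)) (γ : ℝ → Pt d) : ℝ :=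
  ∫ t in (0:ℝ)..1, Metric.infDist (γ t) P * ‖deriv γ t‖

/-- The nearest-neighbor geodesic distance:
`d_N(a,b) = 4 ⬝ inf { ℓ(γ) | γ piecewise-C¹ path from a to b }`. -/
noncomputable def nnGeo {d : ℕ} (P : Set (Pt d)) (a b : Pt d) : ℝ :=
  4 * sInf {l : ℝ | ∃ γ : ℝ → Pt d, PiecewiseC1 γ ∧ γ 0 = a ∧ γ 1 = b ∧ l = nnLength P γ}

/-!
Sample a piecewise-C¹ path `γ` at the times `k / N` and join the images `f (γ (k / N))` by
segments. Because `infDist` is 1-Lipschitz, on a cell of length `ℓ` the nearest-neighbour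
integral of either path differs from `ℓ` times the distance of the cell's starting point to
the reference set by at most `ℓ ^ 2`. As `f` shrinks both the lengths and the distances to the
reference set, the polygon is at most `2 ∑ ℓ_k ^ 2 ≤ 2 M ^ 2 / N` longer than `γ`, where `M`
bounds `‖γ'‖`; letting `N → ∞` compares the infima.
-/

open Set Metric intervalIntegral Topology

theorem Fin.exists_mem_Icc_castSucc_succ {α : Type*} [LinearOrder α] {m : ℕ} (hm : m ≠ 0)
    (p : Fin (m + 1) → α) {t : α} (ht : t ∈ Icc (p 0) (p (Fin.last m))) :
    ∃ i : Fin m, t ∈ Icc (p i.castSucc) (p i.succ) := by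
  obtain ⟨m, rfl⟩ := Nat.exists_eq_succ_of_ne_zero hm
  induction m with
  | zero => exact ⟨0, ht⟩
  | succ m ih =>
    by_cases hlt : t ≤ p (Fin.last (m + 1)).castSucc
    · obtain ⟨i, hi⟩ := ih m.succ_ne_zero (p ∘ Fin.castSucc) ⟨ht.1, hlt⟩
      exact ⟨i.castSucc, hi⟩
    · exact ⟨Fin.last (m + 1), (not_le.mp hlt).le, ht.2⟩

theorem LipschitzWith.infDist_image_le {α β : Type*} [PseudoMetricSpace α] [PseudoMetricSpace β]
    {f : α → β} (hf : LipschitzWith 1 f) (s : Set α) (x : α) :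
    infDist (f x) (f '' s) ≤ infDist x s := by
  rcases s.eq_empty_or_nonempty with rfl | hs
  · simp
  refine (le_infDist hs).2 fun y hy => ?_
  calc infDist (f x) (f '' s) ≤ dist (f x) (f y) := infDist_le_dist_of_mem (mem_image_of_mem f hy)
    _ ≤ dist x y := by simpa using hf.dist_le_mul x y

theorem nnLength_nonneg {d : ℕ} (Q : Set (Pt d)) (γ : ℝ → Pt d) : 0 ≤ nnLength Q γ :=
  integral_nonneg zero_le_one fun _ _ => mul_nonneg infDist_nonneg (norm_nonneg _)

theorem piecewiseC1_of_contDiffOn {d m : ℕ} {γ : ℝ → Pt d} {p : Fin (m + 1) → ℝ}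
    (hp : StrictMono p) (h0 : p 0 = 0) (h1 : p (Fin.last m) = 1)
    (hγ : ∀ i : Fin m, ContDiffOn ℝ 1 γ (Icc (p i.castSucc) (p i.succ))) : PiecewiseC1 γ := by
  have hm : m ≠ 0 := by rintro rfl; exact zero_ne_one (h0.symm.trans h1)
  have hcover : Icc 0 1 ⊆ ⋃ i : Fin m, Icc (p i.castSucc) (p i.succ) := fun t ht =>
    mem_iUnion.2 (Fin.exists_mem_Icc_castSucc_succ hm p (by rwa [h0, h1]))
  refine ⟨ContinuousOn.mono ?_ hcover, m, p, hp, h0, h1, hγ⟩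
  exact (locallyFinite_of_finite _).continuousOn_iUnion (fun _ => isClosed_Icc)
    fun i => (hγ i).continuousOn

theorem piecewiseC1_lineMap {d : ℕ} (a b : Pt d) :
    PiecewiseC1 (AffineMap.lineMap a b : ℝ → Pt d) :=
  piecewiseC1_of_contDiffOn (p := fun i : Fin 2 => (i : ℝ)) (fun i j hij => by simpa using hij)
    (by simp) (by simp) fun _ => (AffineMap.contDiff_lineMap a b).contDiffOn

namespace PiecewiseC1

variable {d : ℕ} {γ : ℝ → Pt d}

theorem exists_bound_deriv (hγ : PiecewiseC1 γ) : ∃ M, ∀ t ∈ Icc (0 : ℝ) 1, ‖deriv γ t‖ ≤ M := by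
  obtain ⟨-, m, p, hp, h0, h1, hC1⟩ := hγ
  have hm : m ≠ 0 := by rintro rfl; exact zero_ne_one (h0.symm.trans h1)
  have huniq : ∀ i : Fin m, UniqueDiffOn ℝ (Icc (p i.castSucc) (p i.succ)) := fun i =>
    uniqueDiffOn_Icc (hp i.castSucc_lt_succ)
  choose B hB using fun i => isCompact_Icc.exists_bound_of_continuousOn
    ((hC1 i).continuousOn_derivWithin (huniq i) le_rfl)
  obtain ⟨M, hM⟩ := Finite.exists_le B
  refine ⟨M, fun t ht => ?_⟩
  obtain ⟨i, hi⟩ := Fin.exists_mem_Icc_castSucc_succ hm p (by rwa [h0, h1])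
  have hwithin := (hB i t hi).trans (hM i)
  by_cases hd : DifferentiableAt ℝ γ t
  · rwa [← hd.hasDerivAt.hasDerivWithinAt.derivWithin (huniq i t hi)]
  · rw [deriv_zero_of_not_differentiableAt hd, norm_zero]
    exact (norm_nonneg _).trans hwithin

theorem exists_countable_hasDerivAt (hγ : PiecewiseC1 γ) :
    ∃ S : Set ℝ, S.Countable ∧ ∀ t ∈ Ioo (0 : ℝ) 1 \ S, HasDerivAt γ (deriv γ t) t := by
  obtain ⟨-, m, p, hp, h0, h1, hC1⟩ := hγ
  have hm : m ≠ 0 := by rintro rfl; exact zero_ne_one (h0.symm.trans h1)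
  refine ⟨range p, countable_range p, fun t ⟨ht, hnode⟩ => ?_⟩
  obtain ⟨i, hi⟩ :=
    Fin.exists_mem_Icc_castSucc_succ hm p (by rw [h0, h1]; exact Ioo_subset_Icc_self ht)
  have hpiece : Icc (p i.castSucc) (p i.succ) ∈ 𝓝 t :=
    Icc_mem_nhds (hi.1.lt_of_ne fun h => hnode ⟨_, h⟩) (hi.2.lt_of_ne fun h => hnode ⟨_, h.symm⟩)
  exact (((hC1 i).contDiffAt hpiece).differentiableAt one_ne_zero).hasDerivAt

theorem intervalIntegrable_deriv (hγ : PiecewiseC1 γ) {u v : ℝ} (hu : u ∈ Icc (0 : ℝ) 1)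
    (hv : v ∈ Icc (0 : ℝ) 1) : IntervalIntegrable (deriv γ) volume u v := by
  obtain ⟨M, hM⟩ := hγ.exists_bound_deriv
  have hsub : uIcc u v ⊆ Icc 0 1 := uIcc_subset_Icc hu hv
  refine (intervalIntegrable_const (c := M)).mono_fun'
    (measurable_deriv γ).aestronglyMeasurable ?_
  exact (ae_restrict_mem measurableSet_uIoc).mono fun t ht => hM t (hsub (uIoc_subset_uIcc ht))

theorem intervalIntegrable_infDist_mul (hγ : PiecewiseC1 γ) (Q : Set (Pt d)) {u v : ℝ}
    (hu : u ∈ Icc (0 : ℝ) 1) (hv : v ∈ Icc (0 : ℝ) 1) :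
    IntervalIntegrable (fun t => infDist (γ t) Q * ‖deriv γ t‖) volume u v :=
  (hγ.intervalIntegrable_deriv hu hv).norm.continuousOn_mul
    ((continuous_infDist_pt Q).comp_continuousOn (hγ.1.mono (uIcc_subset_Icc hu hv)))

theorem norm_sub_le_integral (hγ : PiecewiseC1 γ) {u v : ℝ} (hu : 0 ≤ u) (huv : u ≤ v)
    (hv : v ≤ 1) : ‖γ v - γ u‖ ≤ ∫ t in u..v, ‖deriv γ t‖ := by
  obtain ⟨S, hS, hdiff⟩ := hγ.exists_countable_hasDerivAt
  rw [← integral_eq_of_hasDerivAt_off_countable_of_le γ (deriv γ) huv hS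
    (hγ.1.mono (Icc_subset_Icc hu hv)) (fun t ht => hdiff t ⟨Ioo_subset_Ioo hu hv ht.1, ht.2⟩)
    (hγ.intervalIntegrable_deriv ⟨hu, huv.trans hv⟩ ⟨hu.trans huv, hv⟩)]
  exact norm_integral_le_integral_norm huv

theorem abs_integral_infDist_mul_sub_le (hγ : PiecewiseC1 γ) (Q : Set (Pt d)) {u v : ℝ}
    (hu : 0 ≤ u) (huv : u ≤ v) (hv : v ≤ 1) :
    |(∫ t in u..v, infDist (γ t) Q * ‖deriv γ t‖) - infDist (γ u) Q * ∫ t in u..v, ‖deriv γ t‖|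
      ≤ (∫ t in u..v, ‖deriv γ t‖) ^ 2 := by
  set ℓ := ∫ t in u..v, ‖deriv γ t‖
  have hg : IntervalIntegrable (fun t => ‖deriv γ t‖) volume u v :=
    (hγ.intervalIntegrable_deriv ⟨hu, huv.trans hv⟩ ⟨hu.trans huv, hv⟩).norm
  have hpoint : ∀ t ∈ Ioc u v,
      ‖(infDist (γ t) Q - infDist (γ u) Q) * ‖deriv γ t‖‖ ≤ ℓ * ‖deriv γ t‖ := by
    intro t ht
    rw [norm_mul, norm_norm, ← dist_eq_norm]
    gcongr
    calc dist (infDist (γ t) Q) (infDist (γ u) Q) ≤ ‖γ t - γ u‖ := by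
          simpa [dist_eq_norm] using lipschitz_infDist_pt Q |>.dist_le_mul (γ t) (γ u)
      _ ≤ ∫ s in u..t, ‖deriv γ s‖ := hγ.norm_sub_le_integral hu ht.1.le (ht.2.trans hv)
      _ ≤ ℓ := integral_mono_interval le_rfl ht.1.le ht.2
          (Filter.Eventually.of_forall fun _ => norm_nonneg _) hg
  calc _ = |∫ t in u..v, (infDist (γ t) Q - infDist (γ u) Q) * ‖deriv γ t‖| := by
        simp only [sub_mul]
        rw [integral_sub (hγ.intervalIntegrable_infDist_mul Q ⟨hu, huv.trans hv⟩
          ⟨hu.trans huv, hv⟩) (hg.const_mul _), intervalIntegral.integral_const_mul]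
    _ ≤ ∫ t in u..v, ℓ * ‖deriv γ t‖ :=
        norm_integral_le_of_norm_le huv (Filter.Eventually.of_forall hpoint) (hg.const_mul ℓ)
    _ = ℓ ^ 2 := by rw [intervalIntegral.integral_const_mul, sq]

end PiecewiseC1

theorem integral_infDist_mul_le_of_le {d n : ℕ} {γ : ℝ → Pt d} {σ : ℝ → Pt n}
    (hγ : PiecewiseC1 γ) (hσ : PiecewiseC1 σ) (P : Set (Pt d)) (Q : Set (Pt n)) {u v : ℝ}
    (hu : 0 ≤ u) (huv : u ≤ v) (hv : v ≤ 1) (hr : infDist (σ u) Q ≤ infDist (γ u) P)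
    (hℓ : ∫ t in u..v, ‖deriv σ t‖ ≤ ∫ t in u..v, ‖deriv γ t‖) :
    ∫ t in u..v, infDist (σ t) Q * ‖deriv σ t‖ ≤
      (∫ t in u..v, infDist (γ t) P * ‖deriv γ t‖) + 2 * (∫ t in u..v, ‖deriv γ t‖) ^ 2 := by
  have hσ₀ : 0 ≤ ∫ t in u..v, ‖deriv σ t‖ := integral_nonneg huv fun _ _ => norm_nonneg _
  have hupper := (abs_le.1 (hσ.abs_integral_infDist_mul_sub_le Q hu huv hv)).2
  have hlower := (abs_le.1 (hγ.abs_integral_infDist_mul_sub_le P hu huv hv)).1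
  have hmul := mul_le_mul hr hℓ hσ₀ infDist_nonneg
  have hsq := pow_le_pow_left₀ hσ₀ hℓ 2
  linarith

section Polygon

variable {E : Type*} [NormedAddCommGroup E] [NormedSpace ℝ E]

/-- The polygon through `A 0, A 1, …` visiting `A k` at time `k / N`. -/
def polygon (N : ℕ) (A : ℕ → E) (t : ℝ) : E :=
  AffineMap.lineMap (A ⌊N * t⌋₊) (A (⌊N * t⌋₊ + 1)) (N * t - ⌊N * t⌋₊)

variable {N : ℕ} (A : ℕ → E)

theorem polygon_eq_lineMap {k : ℕ} {t : ℝ} (h₁ : k ≤ N * t) (h₂ : N * t ≤ k + 1) :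
    polygon N A t = AffineMap.lineMap (A k) (A (k + 1)) (N * t - k) := by
  rcases h₂.lt_or_eq with h₂ | h₂
  · rw [polygon, Nat.floor_eq_on_Ico k (N * t) ⟨h₁, h₂⟩]
  · have hfloor : ⌊(N : ℝ) * t⌋₊ = k + 1 := by
      rw [h₂]; exact_mod_cast Nat.floor_natCast (k + 1)
    rw [polygon, hfloor, h₂]
    push_cast
    simp

theorem polygon_natCast_div (hN : N ≠ 0) (k : ℕ) : polygon N A (k / N) = A k := by
  have hk : (N : ℝ) * (k / N) = k := mul_div_cancel₀ _ (Nat.cast_ne_zero.2 hN)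
  rw [polygon_eq_lineMap A hk.ge (by linarith), hk, sub_self, AffineMap.lineMap_apply_zero]

theorem hasDerivAt_polygon {k : ℕ} {t : ℝ} (h₁ : k < N * t) (h₂ : N * t < k + 1) :
    HasDerivAt (polygon N A) ((N : ℝ) • (A (k + 1) - A k)) t := by
  have hloc :
      (fun s => AffineMap.lineMap (A k) (A (k + 1)) (N * s - k)) =ᶠ[𝓝 t] polygon N A := by
    filter_upwards [(continuous_const_mul (N : ℝ)).continuousAt.eventually_mem
      (isOpen_Ioo.mem_nhds ⟨h₁, h₂⟩)] with s hs
    exact (polygon_eq_lineMap A hs.1.le hs.2.le).symm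
  have hinner : HasDerivAt (fun s : ℝ => N * s - k) N t := by
    simpa using ((hasDerivAt_id t).const_mul (N : ℝ)).sub_const (k : ℝ)
  exact (AffineMap.hasDerivAt_lineMap.scomp t hinner).congr_of_eventuallyEq hloc.symm

theorem integral_norm_deriv_polygon (hN : N ≠ 0) (k : ℕ) :
    ∫ t in (k / N : ℝ)..((k + 1) / N), ‖deriv (polygon N A) t‖ = ‖A (k + 1) - A k‖ := by
  have hN₀ : (0 : ℝ) < N := Nat.cast_pos.2 (Nat.pos_of_ne_zero hN)
  have hle : (k / N : ℝ) ≤ (k + 1) / N := by gcongr; linarith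
  rw [integral_of_le hle, integral_Ioc_eq_integral_Ioo,
    setIntegral_congr_fun measurableSet_Ioo (g := fun _ => ‖(N : ℝ) • (A (k + 1) - A k)‖)
      fun t ht => by
        rw [(hasDerivAt_polygon A ((div_lt_iff₀' hN₀).1 ht.1) ((lt_div_iff₀' hN₀).1 ht.2)).deriv],
    setIntegral_const, Real.volume_real_Ioo_of_le hle, norm_smul, Real.norm_natCast, smul_eq_mul]
  field_simp
  ring

end Polygon

theorem piecewiseC1_polygon {n N : ℕ} (hN : N ≠ 0) (A : ℕ → Pt n) :
    PiecewiseC1 (polygon N A) := by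
  have hN₀ : (0 : ℝ) < N := Nat.cast_pos.2 (Nat.pos_of_ne_zero hN)
  refine piecewiseC1_of_contDiffOn (p := fun i : Fin (N + 1) => (i / N : ℝ))
    (fun i j hij => div_lt_div_of_pos_right (by exact_mod_cast hij) hN₀) (by simp)
    (by simp [hN₀.ne']) fun i => ?_
  have hline : ContDiff ℝ 1 fun t : ℝ => AffineMap.lineMap (A i) (A (i + 1)) (N * t - i) := by
    fun_prop
  refine hline.contDiffOn.congr fun t ht => ?_
  have h₁ : (i : ℝ) ≤ N * t := (div_le_iff₀' hN₀).1 ht.1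
  have h₂ : N * t ≤ (i : ℝ) + 1 := (le_div_iff₀' hN₀).1 (by simpa using ht.2)
  simpa using polygon_eq_lineMap A h₁ h₂

theorem natCast_div_mem_Icc {k N : ℕ} (hk : k ≤ N) : (k / N : ℝ) ∈ Icc 0 1 :=
  ⟨by positivity, div_le_one_of_le₀ (by exact_mod_cast hk) N.cast_nonneg⟩

theorem nnLength_eq_sum {d N : ℕ} {γ : ℝ → Pt d} (hγ : PiecewiseC1 γ) (Q : Set (Pt d))
    (hN : N ≠ 0) :
    nnLength Q γ = ∑ k ∈ Finset.range N,
      ∫ t in (k / N : ℝ)..((k + 1) / N), infDist (γ t) Q * ‖deriv γ t‖ := by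
  have hsum := sum_integral_adjacent_intervals (a := fun k : ℕ => (k / N : ℝ)) fun k hk =>
    hγ.intervalIntegrable_infDist_mul Q (natCast_div_mem_Icc hk.le) (natCast_div_mem_Icc hk)
  simp only [Nat.cast_succ, Nat.cast_zero, zero_div,
    div_self (Nat.cast_ne_zero.2 hN : (N : ℝ) ≠ 0)] at hsum
  rw [nnLength, hsum]

theorem exists_polygon_nnLength_image_le {d n : ℕ} {P : Set (Pt d)} {f : Pt d → Pt n}
    (hf : LipschitzWith 1 f) {γ : ℝ → Pt d} (hγ : PiecewiseC1 γ) {ε : ℝ} (hε : 0 < ε) :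
    ∃ σ : ℝ → Pt n, PiecewiseC1 σ ∧ σ 0 = f (γ 0) ∧ σ 1 = f (γ 1) ∧
      nnLength (f '' P) σ ≤ nnLength P γ + ε := by
  obtain ⟨M, hM⟩ := hγ.exists_bound_deriv
  obtain ⟨N, hNε⟩ := exists_nat_gt (2 * M ^ 2 / ε)
  have hN₀ : (0 : ℝ) < N := (div_nonneg (by positivity) hε.le).trans_lt hNε
  have hN : N ≠ 0 := by exact_mod_cast hN₀.ne'
  set A : ℕ → Pt n := fun k => f (γ (k / N))
  have hσ := piecewiseC1_polygon hN A
  have hcell : ∀ k < N, ∫ t in (k / N : ℝ)..((k + 1) / N),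
      infDist (polygon N A t) (f '' P) * ‖deriv (polygon N A) t‖ ≤
      (∫ t in (k / N : ℝ)..((k + 1) / N), infDist (γ t) P * ‖deriv γ t‖) + 2 * (M / N) ^ 2 := by
    intro k hk
    have hu := natCast_div_mem_Icc hk.le
    have hv : ((k + 1) / N : ℝ) ∈ Icc 0 1 := by simpa using natCast_div_mem_Icc hk
    have huv : (k / N : ℝ) ≤ (k + 1) / N := by gcongr; linarith
    have hr : infDist (polygon N A (k / N)) (f '' P) ≤ infDist (γ (k / N)) P := by
      rw [polygon_natCast_div A hN]
      exact hf.infDist_image_le P _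
    have hℓ : ∫ t in (k / N : ℝ)..((k + 1) / N), ‖deriv (polygon N A) t‖ ≤
        ∫ t in (k / N : ℝ)..((k + 1) / N), ‖deriv γ t‖ := by
      rw [integral_norm_deriv_polygon A hN k]
      calc ‖A (k + 1) - A k‖ ≤ ‖γ ((k + 1) / N) - γ (k / N)‖ := by
            simpa [A, dist_eq_norm] using hf.dist_le_mul (γ ((k + 1) / N)) (γ (k / N))
        _ ≤ _ := hγ.norm_sub_le_integral hu.1 huv hv.2
    have hlen₀ : 0 ≤ ∫ t in (k / N : ℝ)..((k + 1) / N), ‖deriv γ t‖ :=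
      integral_nonneg huv fun _ _ => norm_nonneg _
    have hlen : ∫ t in (k / N : ℝ)..((k + 1) / N), ‖deriv γ t‖ ≤ M / N := by
      have := norm_integral_le_of_norm_le_const fun t ht =>
        (norm_norm (deriv γ t)).trans_le (hM t (uIcc_subset_Icc hu hv (uIoc_subset_uIcc ht)))
      rw [Real.norm_of_nonneg hlen₀, abs_of_nonneg (sub_nonneg.2 huv)] at this
      convert this using 1
      field_simp
      ring
    calc _ ≤ _ := integral_infDist_mul_le_of_le hγ hσ P (f '' P) hu.1 huv hv.2 hr hℓ
      _ ≤ _ := by gcongr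
  refine ⟨polygon N A, hσ, by simpa [A] using polygon_natCast_div A hN 0,
    by simpa [A, hN] using polygon_natCast_div A hN N, ?_⟩
  calc nnLength (f '' P) (polygon N A)
      ≤ ∑ k ∈ Finset.range N, ((∫ t in (k / N : ℝ)..((k + 1) / N),
          infDist (γ t) P * ‖deriv γ t‖) + 2 * (M / N) ^ 2) := by
        rw [nnLength_eq_sum hσ _ hN]
        exact Finset.sum_le_sum fun k hk => hcell k (Finset.mem_range.1 hk)
    _ = nnLength P γ + 2 * M ^ 2 / N := by
        rw [Finset.sum_add_distrib, ← nnLength_eq_sum hγ P hN, Finset.sum_const,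
          Finset.card_range, nsmul_eq_mul]
        field_simp
    _ ≤ nnLength P γ + ε := by
        gcongr
        rw [div_le_iff₀ hN₀]
        rw [div_lt_iff₀ hε] at hNε
        linarith

theorem nnGeo_lipschitz_map_general (d n : ℕ) (P : Set (Pt d))
    (f : Pt d → Pt n) (hf : LipschitzWith 1 f) (a b : Pt d) :
    nnGeo (f '' P) (f a) (f b) ≤ nnGeo P a b := by
  refine mul_le_mul_of_nonneg_left ?_ zero_le_four
  refine le_csInf ⟨_, _, piecewiseC1_lineMap a b, by simp, by simp, rfl⟩ ?_
  rintro _ ⟨γ, hγ, rfl, rfl, rfl⟩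
  refine le_of_forall_pos_le_add fun ε hε => ?_
  obtain ⟨σ, hσ, hσ0, hσ1, hle⟩ := exists_polygon_nnLength_image_le (P := P) hf hγ hε
  have hbdd : BddBelow {l : ℝ | ∃ σ : ℝ → Pt n, PiecewiseC1 σ ∧ σ 0 = f (γ 0) ∧
      σ 1 = f (γ 1) ∧ l = nnLength (f '' P) σ} :=
    ⟨0, by rintro _ ⟨σ, -, -, -, rfl⟩; exact nnLength_nonneg _ σ⟩
  exact (csInf_le hbdd ⟨σ, hσ, hσ0, hσ1, rfl⟩).trans hle

/-- If `f : ℝ^d → ℝⁿ` is 1-Lipschitz for the Euclidean metrics, then `f` is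
1-Lipschitz for the nearest-neighbor geodesic distances relative to a finite set `P` and its
image `f(P)`: `d_N^{f(P)}(f a, f b) ≤ d_N^P(a, b)` for all `a, b ∈ ℝ^d`. -/
theorem nnGeo_lipschitz_map (d n : ℕ) (P : Set (Pt d)) (hP : P.Finite)
    (f : Pt d → Pt n) (hf : LipschitzWith 1 f) (a b : Pt d) :
    nnGeo (f '' P) (f a) (f b) ≤ nnGeo P a b :=
  nnGeo_lipschitz_map_general d n P f hf a b
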